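/- Let x, y be permutations of [n] with x(n) = y(n). Then x ⊵_R y with ℓ(x) = ℓ(y) + 1 if and only if x̂ ⊵_R ŷ with ℓ(x̂) = ℓ(ŷ) + 1. (In particular ℓ(x̂) = ℓ(x) − (n − x(n)).) -/

import Mathlib

/-- `o` is the outcome of running parking Algorithm A on preference vector `a`:
car `i` parks in the first unoccupied spot in `[a i, n]`, and every car parks. -/
def IsAOutcome {n : ℕ} (a o : Fin n → Fin n) : Prop :=
  Function.Injective o ∧ ∀ i, a i ≤ o i ∧
    ∀ s, a i ≤ s → s < o i → ∃ j, j < i ∧ o j = s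

/-- `a` is a parking function. -/
def IsParkingFunction {n : ℕ} (a : Fin n → Fin n) : Prop :=
  ∃ o, IsAOutcome a o

/-- `o` is the outcome of running parking Algorithm B on the pair `(a, b)`:
car `i` parks in the first unoccupied spot in `[a i, b i]`, and every car parks. -/
def IsBOutcome {n : ℕ} (a b o : Fin n → Fin n) : Prop :=
  Function.Injective o ∧ ∀ i, a i ≤ o i ∧ o i ≤ b i ∧
    ∀ s, a i ≤ s → s < o i → ∃ j, j < i ∧ o j = s

/-- `(a, b)` is an interval parking function. -/
def IsIPF {n : ℕ} (a b : Fin n → Fin n) : Prop :=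
  ∃ o, IsBOutcome a b o

/-- The conjugate (reverse complement) `x*` of `x`, with `x*(i) = n + 1 - x(n + 1 - i)`. -/
def pconj {n : ℕ} (f : Fin n → Fin n) : Fin n → Fin n :=
  fun i => (f i.rev).rev

/-- The pair `(x, y)` is reachable, `x ⊵_R y`: there is an IPF `(a, b)` with
`O(a) = x` and `O(b*) = y*`. -/
def Reaches {n : ℕ} (x y : Fin n → Fin n) : Prop :=
  ∃ a b : Fin n → Fin n, IsIPF a b ∧ IsAOutcome a x ∧ IsAOutcome (pconj b) (pconj y)

/-- Pseudoreachability `x ≥_P y`: the reflexive-transitive closure of reachability. -/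
def PseudoGE {n : ℕ} (x y : Equiv.Perm (Fin n)) : Prop :=
  Relation.ReflTransGen (fun u v : Equiv.Perm (Fin n) => Reaches ⇑u ⇑v) x y

/-- `#{k ∈ [i] : x(k) ≥ j}` (with `i`, `j` zero-indexed). -/
def bcount {n : ℕ} (x : Fin n → Fin n) (i j : Fin n) : ℕ :=
  (Finset.univ.filter (fun k : Fin n => k ≤ i ∧ j ≤ x k)).card

/-- The Bruhat order `x ≥_B y` on the symmetric group. -/
def BruhatGE {n : ℕ} (x y : Equiv.Perm (Fin n)) : Prop :=
  ∀ i j : Fin n, bcount ⇑y i j ≤ bcount ⇑x i j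

/-- The number of inversions (the Coxeter length) of `f`. -/
def invCount {n : ℕ} (f : Fin n → Fin n) : ℕ :=
  (Finset.univ.filter (fun p : Fin n × Fin n => p.1 < p.2 ∧ f p.2 < f p.1)).card

/-- The adjacent transposition `s_i` exchanging `i` and `i+1` (one-indexed),
as a permutation of `Fin n`. -/
def sgen (n : ℕ) (i : ℕ) : Equiv.Perm (Fin n) :=
  if h : 1 ≤ i ∧ i < n then Equiv.swap ⟨i - 1, by omega⟩ ⟨i, h.2⟩ else 1

/-- Left weak order: `x ≥_W y` iff `x = s_{i₁} ⋯ s_{i_k} · y` with `ℓ(x) = ℓ(y) + k`. -/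
def WeakGE {n : ℕ} (x y : Equiv.Perm (Fin n)) : Prop :=
  ∃ l : List ℕ, (∀ i ∈ l, 1 ≤ i ∧ i ≤ n - 1) ∧
    x = (l.map (sgen n)).prod * y ∧ invCount ⇑x = invCount ⇑y + l.length

/-- The projection `x ↦ x̂` deleting the last position and the value `x(n)`. -/
def hatf {n : ℕ} (x : Fin (n + 1) → Fin (n + 1)) : Fin n → Fin n :=
  fun i =>
    if h : (x i.castSucc).val < (x (Fin.last n)).val
    then ⟨(x i.castSucc).val, by have h1 := (x (Fin.last n)).isLt; omega⟩
    else ⟨(x i.castSucc).val - 1, by have h1 := (x i.castSucc).isLt; have h2 := i.isLt; omega⟩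

/-- `lam n f k` is `λ_k` of the permutation of `[n]` with one-line notation `f(1), …, f(n)`
(one-indexed): `λ_{n-1}(x) = n - x(n)` and `λ_k(x) = λ_k(x̄)` for `k ≤ n - 2`, where
`x̄ ∈ S_{n-1}` is the restriction of `u⁻¹·x` (`u = s_{x(n)} ⋯ s_{n-1}`), concretely
`x̄(i) = x(i)` if `x(i) < x(n)` and `x̄(i) = x(i) - 1` if `x(i) > x(n)`. -/
def lam : ℕ → (ℕ → ℕ) → ℕ → ℕ
  | 0, _, _ => 0
  | n + 1, f, k =>
    if k = n then (n + 1) - f (n + 1)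
    else lam n (fun i => if f i < f (n + 1) then f i else f i - 1) k

/-- The one-line notation of `x`, as a one-indexed function `ℕ → ℕ`. -/
def oneline {n : ℕ} (x : Fin n → Fin n) : ℕ → ℕ :=
  fun i => if h : i - 1 < n then (x ⟨i - 1, h⟩).val + 1 else 0

/-- `y` contains the pattern `σ`. -/
def ContainsPattern {n m : ℕ} (y : Equiv.Perm (Fin n)) (σ : Equiv.Perm (Fin m)) : Prop :=
  ∃ f : Fin m → Fin n, StrictMono f ∧ ∀ j k, y (f j) < y (f k) ↔ σ j < σ k

/-- `x` is an AR (Arndt–Riehl) permutation: `x⁻¹(i) ≤ i + 1` for all `i ∈ [n]`. -/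
def IsAR {n : ℕ} (x : Equiv.Perm (Fin n)) : Prop :=
  ∀ i : Fin n, (x.symm i).val ≤ i.val + 1


/-! For injective `x, y`, `x ⊵_R y` holds iff every spot `s` with `y i < s ≤ x i` is taken by
`y` at a later position: the IPF `(x, x ⊔ y)` witnesses the converse, and for any witnessing IPF
the B-outcome is forced to be `x`, so conjugating turns the parking rule for `b*` into the gap
condition.

If `x n = y n = p`, then `x` and `y` on the first `n - 1` positions factor as `p.succAbove ∘ x̂`
and `p.succAbove ∘ ŷ`, an order embedding missing only `p`, so the gap condition passes between
`(x, y)` and `(x̂, ŷ)` (the spot `p` itself is taken by `y` at position `n`). Deleting the last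
position removes exactly the `n - p` inversions `(i, n)` with `x i > p`, and the same number for
`y`, so the length condition passes as well. -/

open Function

section Parking

variable {n : ℕ}

theorem IsAOutcome.le_of_eqOn_lt {a o o' : Fin n → Fin n} (h : IsAOutcome a o)
    (h' : IsAOutcome a o') {i : Fin n} (hi : ∀ j < i, o j = o' j) : o i ≤ o' i := by
  by_contra! hlt
  obtain ⟨j, hji, hj⟩ := (h.2 i).2 (o' i) (h'.2 i).1 hlt
  rw [hi j hji] at hj
  exact hji.ne (h'.1 hj)

theorem IsAOutcome.unique {a o o' : Fin n → Fin n} (h : IsAOutcome a o)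
    (h' : IsAOutcome a o') : o = o' := by
  funext i
  induction i using WellFoundedLT.induction with
  | _ i ih =>
    exact (h.le_of_eqOn_lt h' ih).antisymm (h'.le_of_eqOn_lt h fun j hj => (ih j hj).symm)

theorem IsAOutcome.self {x : Fin n → Fin n} (hx : Injective x) : IsAOutcome x x :=
  ⟨hx, fun _ => ⟨le_rfl, fun _ hs hs' => absurd hs hs'.not_ge⟩⟩

theorem IsBOutcome.isAOutcome {a b o : Fin n → Fin n} (h : IsBOutcome a b o) :
    IsAOutcome a o :=
  ⟨h.1, fun i => ⟨(h.2 i).1, (h.2 i).2.2⟩⟩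

def GapsFilledLater (x y : Fin n → Fin n) : Prop :=
  ∀ i s : Fin n, y i < s → s ≤ x i → ∃ j, i < j ∧ y j = s

theorem Reaches.gapsFilledLater {x y : Fin n → Fin n} (h : Reaches x y) :
    GapsFilledLater x y := by
  obtain ⟨a, b, ⟨o, hb⟩, hx, hy⟩ := h
  obtain rfl : o = x := hb.isAOutcome.unique hx
  intro i s hys hsx
  obtain ⟨j, hj, hjs⟩ := (hy.2 i.rev).2 s.rev
    (by simpa [pconj] using hsx.trans (hb.2 i).2.1) (by simpa [pconj] using hys)
  exact ⟨j.rev, Fin.lt_rev_iff.mpr hj, by simpa [pconj] using hjs⟩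

theorem GapsFilledLater.reaches {x y : Fin n → Fin n} (hx : Injective x) (hy : Injective y)
    (h : GapsFilledLater x y) : Reaches x y := by
  refine ⟨x, x ⊔ y,
    ⟨x, hx, fun i => ⟨le_rfl, le_sup_left, fun _ hs hs' => absurd hs hs'.not_ge⟩⟩,
    IsAOutcome.self hx, fun i j hij => Fin.rev_injective (hy (Fin.rev_injective hij)),
    fun i => ⟨?_, ?_⟩⟩
  · simp [pconj]
  · intro s hs hsy
    rw [pconj, Fin.rev_le_iff, Pi.sup_apply] at hs
    rw [pconj, Fin.lt_rev_iff] at hsy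
    obtain ⟨j, hj, hjs⟩ := h i.rev s.rev hsy ((le_sup_iff.mp hs).resolve_right hsy.not_ge)
    exact ⟨j.rev, Fin.rev_lt_iff.mpr hj, by simp [pconj, hjs]⟩

theorem reaches_iff_gapsFilledLater {x y : Fin n → Fin n} (hx : Injective x)
    (hy : Injective y) : Reaches x y ↔ GapsFilledLater x y :=
  ⟨Reaches.gapsFilledLater, GapsFilledLater.reaches hx hy⟩

end Parking

section Projection

variable {n : ℕ}

theorem succAbove_hatf {x : Fin (n + 1) → Fin (n + 1)} (hx : Injective x) (i : Fin n) :
    (x (Fin.last n)).succAbove (hatf x i) = x i.castSucc := by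
  have hne : (x i.castSucc).val ≠ (x (Fin.last n)).val :=
    fun h => (Fin.castSucc_lt_last i).ne (hx (Fin.ext h))
  unfold hatf Fin.succAbove
  split_ifs with _ h₂ h₂ <;> simp only [Fin.lt_def, Fin.val_castSucc] at h₂ <;> ext <;>
    simp only [Fin.val_castSucc, Fin.val_succ] <;> omega

theorem hatf_injective {x : Fin (n + 1) → Fin (n + 1)} (hx : Injective x) :
    Injective (hatf x) := fun i j hij =>
  Fin.castSucc_injective _ <| hx <| by rw [← succAbove_hatf hx, hij, succAbove_hatf hx]

theorem gapsFilledLater_iff_of_succAbove {x y : Fin (n + 1) → Fin (n + 1)} {u v : Fin n → Fin n}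
    {p : Fin (n + 1)} (hxp : x (Fin.last n) = p) (hyp : y (Fin.last n) = p)
    (hxu : ∀ i, p.succAbove (u i) = x i.castSucc)
    (hyv : ∀ i, p.succAbove (v i) = y i.castSucc) :
    GapsFilledLater x y ↔ GapsFilledLater u v := by
  constructor
  · intro h i t hvt htu
    obtain ⟨j, hij, hjt⟩ := h i.castSucc (p.succAbove t)
      (by rwa [← hyv, Fin.succAbove_lt_succAbove_iff])
      (by rwa [← hxu, Fin.succAbove_le_succAbove_iff])
    obtain ⟨j, rfl⟩ : ∃ j₀ : Fin n, j₀.castSucc = j := by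
      refine Fin.exists_castSucc_eq.mpr fun hj => ?_
      rw [hj, hyp] at hjt
      exact Fin.ne_succAbove _ _ hjt
    exact ⟨j, Fin.castSucc_lt_castSucc_iff.mp hij,
      Fin.succAbove_right_injective (by rw [hyv, hjt])⟩
  · intro h i s hys hsx
    induction i using Fin.lastCases with
    | last => exact absurd (hys.trans_le hsx) (by rw [hxp, hyp]; exact lt_irrefl p)
    | cast i =>
      obtain rfl | hsp := eq_or_ne s p
      · exact ⟨Fin.last n, Fin.castSucc_lt_last i, hyp⟩
      obtain ⟨t, rfl⟩ := Fin.exists_succAbove_eq hsp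
      obtain ⟨j, hij, hjt⟩ := h i t (by rwa [← hyv, Fin.succAbove_lt_succAbove_iff] at hys)
        (by rwa [← hxu, Fin.succAbove_le_succAbove_iff] at hsx)
      exact ⟨j.castSucc, Fin.castSucc_lt_castSucc_iff.mpr hij, by rw [← hyv, hjt]⟩

theorem invCount_eq_sum (f : Fin n → Fin n) :
    invCount f = ∑ i, ∑ j, if i < j ∧ f j < f i then 1 else 0 := by
  rw [invCount, Finset.card_filter, ← Finset.univ_product_univ, Finset.sum_product]

theorem sum_ite_last_lt_castSucc (x : Equiv.Perm (Fin (n + 1))) :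
    ∑ i : Fin n, (if x (Fin.last n) < x i.castSucc then 1 else 0) = n - x (Fin.last n) := by
  have h := Equiv.sum_comp x (fun v => if x (Fin.last n) < v then 1 else 0)
  rw [Fin.sum_univ_castSucc, if_neg (lt_irrefl _), add_zero] at h
  rw [h, ← Finset.card_filter, Finset.filter_lt_eq_Ioi, Fin.card_Ioi]
  rfl

theorem invCount_eq_invCount_hatf_add (x : Equiv.Perm (Fin (n + 1))) :
    invCount ⇑x = invCount (hatf ⇑x) + (n - x (Fin.last n)) := by
  rw [invCount_eq_sum, invCount_eq_sum, ← sum_ite_last_lt_castSucc]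
  simp only [Fin.sum_univ_castSucc, Fin.castSucc_lt_castSucc_iff, Fin.castSucc_lt_last,
    (Fin.castSucc_lt_last _).not_gt, lt_irrefl, true_and, false_and, if_false, add_zero,
    Finset.sum_const_zero, Finset.sum_add_distrib, ← succAbove_hatf x.injective,
    Fin.succAbove_lt_succAbove_iff]

end Projection

theorem stmt10_general {n : ℕ} (x y : Equiv.Perm (Fin (n + 1)))
    (h : x (Fin.last n) = y (Fin.last n)) :
    ((Reaches ⇑x ⇑y ∧ invCount ⇑x = invCount ⇑y + 1) ↔
      (Reaches (hatf ⇑x) (hatf ⇑y) ∧ invCount (hatf ⇑x) = invCount (hatf ⇑y) + 1)) ∧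
    invCount (hatf ⇑x) = invCount ⇑x - (n - (x (Fin.last n)).val) := by
  have hreach : Reaches ⇑x ⇑y ↔ Reaches (hatf ⇑x) (hatf ⇑y) := by
    rw [reaches_iff_gapsFilledLater x.injective y.injective,
      reaches_iff_gapsFilledLater (hatf_injective x.injective) (hatf_injective y.injective)]
    exact gapsFilledLater_iff_of_succAbove rfl h.symm (succAbove_hatf x.injective)
      fun i => by rw [h]; exact succAbove_hatf y.injective i
  have hx := invCount_eq_invCount_hatf_add x
  have hy := invCount_eq_invCount_hatf_add y
  rw [← h] at hy
  exact ⟨and_congr hreach (by omega), by omega⟩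

/-- Corollary `cor:rcover`. For `x, y ∈ S_n` (`n ≥ 2`) with
`x(n) = y(n)`: `x ⊵_R y` with `ℓ(x) = ℓ(y) + 1` iff `x̂ ⊵_R ŷ` with `ℓ(x̂) = ℓ(ŷ) + 1`;
in particular `ℓ(x̂) = ℓ(x) - (n - x(n))`. -/
theorem stmt10 {n : ℕ} (hn : 1 ≤ n) (x y : Equiv.Perm (Fin (n + 1)))
    (h : x (Fin.last n) = y (Fin.last n)) :
    ((Reaches ⇑x ⇑y ∧ invCount ⇑x = invCount ⇑y + 1) ↔
      (Reaches (hatf ⇑x) (hatf ⇑y) ∧ invCount (hatf ⇑x) = invCount (hatf ⇑y) + 1)) ∧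
    invCount (hatf ⇑x) = invCount ⇑x - (n - (x (Fin.last n)).val) :=
  stmt10_general x y h
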